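/- Given the connectivity reduction: if for every wCM complex Y of dimension m the r-tupling Dʳ(Y) is ((m−2r)/(r+1))-connected, then for every wCM complex X of dimension n and every p-simplex τ of Dʳ(X), the link of τ in Dʳ(X) is at least (⌊(n−r+1)/(r+1)⌋ − p − 2)-connected. -/

import Mathlib

open CategoryTheory

/-- An abstract simplicial complex on a vertex type `V`: a collection of nonempty
finite subsets of `V` closed under passing to nonempty subsets. -/
structure ASC (V : Type) [DecidableEq V] where
  faces : Set (Finset V)
  nonempty_of_mem : ∀ s ∈ faces, s.Nonempty
  down_closed : ∀ s ∈ faces, ∀ t ⊆ s, t.Nonempty → t ∈ faces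

namespace ASC

variable {V W : Type} [DecidableEq V] [DecidableEq W]

/-- The vertex set of a simplicial complex. -/
def verts (X : ASC V) : Set V := {v | {v} ∈ X.faces}

/-- The full simplex on a (finite) vertex type; `simplexOn (Fin (n+1))` is `Δⁿ`. -/
def simplexOn (V : Type) [DecidableEq V] : ASC V where
  faces := {s | s.Nonempty}
  nonempty_of_mem := fun _ h => h
  down_closed := fun _ _ _ _ h => h

/-- The link of a (possible) simplex `σ`: all faces disjoint from `σ` whose union
with `σ` is again a face. -/
def link (X : ASC V) (σ : Finset V) : ASC V where
  faces := {t | t ∈ X.faces ∧ Disjoint t σ ∧ t ∪ σ ∈ X.faces}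
  nonempty_of_mem := fun s hs => X.nonempty_of_mem s hs.1
  down_closed := by
    rintro s ⟨hs, hd, hu⟩ t hts ht
    refine ⟨X.down_closed s hs t hts ht, hd.mono_left hts, ?_⟩
    exact X.down_closed _ hu _ (Finset.union_subset_union_left hts)
      ⟨ht.choose, Finset.mem_union_left _ ht.choose_spec⟩

/-- The `r`-tupling `Dʳ(X)` of a simplicial complex `X`: vertices are the
`(r-1)`-simplices of `X` (faces with `r` vertices), and a collection of such is a
simplex iff they are pairwise disjoint and their union is a face of `X`. -/
def tupling (X : ASC V) (r : ℕ) : ASC (Finset V) where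
  faces := {S | S.Nonempty ∧ (∀ τ ∈ S, τ ∈ X.faces ∧ τ.card = r) ∧
      ((S : Set (Finset V)).Pairwise Disjoint) ∧ S.biUnion id ∈ X.faces}
  nonempty_of_mem := fun _ h => h.1
  down_closed := by
    rintro S ⟨hS, hmem, hdisj, hun⟩ T hTS hT
    refine ⟨hT, fun τ hτ => hmem τ (hTS hτ), hdisj.mono (by exact_mod_cast hTS), ?_⟩
    refine X.down_closed _ hun _ (Finset.biUnion_subset_biUnion_of_subset_left _ hTS) ?_
    obtain ⟨τ, hτ⟩ := hT
    obtain ⟨v, hv⟩ := X.nonempty_of_mem τ (hmem τ (hTS hτ)).1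
    exact ⟨v, Finset.mem_biUnion.2 ⟨τ, hτ, hv⟩⟩

/-- The double of a simplicial complex. -/
def double (X : ASC V) : ASC (Finset V) := X.tupling 2

/-- The underlying face poset of a simplicial complex, ordered by inclusion. -/
def facePoset (X : ASC V) : Type := {s : Finset V // s ∈ X.faces}

instance (X : ASC V) : PartialOrder X.facePoset :=
  Subtype.partialOrder _

/-- The geometric realization of a simplicial complex, realized as the geometric
realization of the nerve of its face poset (i.e. of its barycentric subdivision). -/
noncomputable def space (X : ASC V) : TopCat :=
  SSet.toTop.obj (nerve X.facePoset)

end ASC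

/-- A topological space is `k`-connected (`k : ℤ`) if it is nonempty (for `k ≥ -1`)
and all its homotopy groups `π_i` for `i ≤ k` are trivial. -/
def IsNConnected (k : ℤ) (T : Type*) [TopologicalSpace T] : Prop :=
  (-1 ≤ k → Nonempty T) ∧
    ∀ (n : ℕ) (x : T), (n : ℤ) ≤ k → Subsingleton (HomotopyGroup (Fin n) T x)

/-- A simplicial complex is weakly Cohen–Macaulay of dimension `n` if it is
`(n-1)`-connected and the link of every `p`-simplex is `(n-p-2)`-connected. -/
def IsWCM {V : Type} [DecidableEq V] (X : ASC V) (n : ℤ) : Prop :=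
  IsNConnected (n - 1) X.space ∧
    ∀ s ∈ X.faces, IsNConnected (n - s.card - 1) (X.link s).space

namespace ASC

variable {V W : Type} [DecidableEq V] [DecidableEq W]

/-- An isomorphism of simplicial complexes: a bijection between the vertex sets
carrying simplices to simplices in both directions. -/
structure Iso (X : ASC V) (Y : ASC W) where
  toEquiv : X.verts ≃ Y.verts
  map_faces : ∀ s : Finset X.verts,
    s.image Subtype.val ∈ X.faces ↔ (s.image toEquiv).image Subtype.val ∈ Y.faces

/-- `X_m`: the order complex of the poset of simplices of `X` with at least `m`
vertices, ordered by inclusion. -/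
def ordered (X : ASC V) (m : ℕ) : ASC (Finset V) where
  faces := {S | S.Nonempty ∧ (∀ s ∈ S, s ∈ X.faces ∧ m ≤ s.card) ∧
      IsChain (· ⊆ ·) (S : Set (Finset V))}
  nonempty_of_mem := fun _ h => h.1
  down_closed := by
    rintro S ⟨hS, hmem, hchain⟩ T hTS hT
    exact ⟨hT, fun s hs => hmem s (hTS hs),
      fun a ha b hb hab => hchain (hTS ha) (hTS hb) hab⟩

/-- The subcomplex of `X_m` consisting of chains of simplices of `X` (with at
least `m` vertices is not imposed here; any predicate `P` cuts out a region). -/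
def regionComplex (X : ASC V) (P : Finset V → Prop) : ASC (Finset V) where
  faces := {S | S.Nonempty ∧ (∀ s ∈ S, s ∈ X.faces ∧ P s) ∧
      IsChain (· ⊆ ·) (S : Set (Finset V))}
  nonempty_of_mem := fun _ h => h.1
  down_closed := by
    rintro S ⟨hS, hmem, hchain⟩ T hTS hT
    exact ⟨hT, fun s hs => hmem s (hTS hs),
      fun a ha b hb hab => hchain (hTS ha) (hTS hb) hab⟩

/-- The join of a finite family of simplicial complexes on a common vertex type:
simplices are the (nonempty) unions of one simplex-or-empty-set from each factor. -/
def joinFam {ι : Type} [Fintype ι] [DecidableEq ι] (Y : ι → ASC V) : ASC V where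
  faces := {s | s.Nonempty ∧ ∃ f : ι → Finset V,
      (∀ i, f i = ∅ ∨ f i ∈ (Y i).faces) ∧ s = Finset.univ.biUnion f}
  nonempty_of_mem := fun _ h => h.1
  down_closed := by
    rintro s ⟨-, f, hf, rfl⟩ t hts ht
    refine ⟨ht, fun i => f i ∩ t, fun i => ?_, ?_⟩
    · by_cases h : (f i ∩ t).Nonempty
      · rcases hf i with h' | h'
        · simp [h'] 
        · exact Or.inr ((Y i).down_closed _ h' _ Finset.inter_subset_left h)
      · exact Or.inl (Finset.not_nonempty_iff_eq_empty.1 h)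
    · ext a
      simp only [Finset.mem_biUnion, Finset.mem_univ, true_and, Finset.mem_inter]
      constructor
      · intro hat
        obtain ⟨i, -, hai⟩ := Finset.mem_biUnion.1 (hts hat)
        exact ⟨i, hai, hat⟩
      · rintro ⟨i, -, hat⟩; exact hat

/-- The boundary `∂Δᵏ` of the `k`-simplex: all nonempty proper subsets of the
`k+1` vertices. -/
def boundary (k : ℕ) : ASC (Fin (k + 1)) where
  faces := {s | s.Nonempty ∧ s ≠ Finset.univ}
  nonempty_of_mem := fun _ h => h.1
  down_closed := by
    rintro s ⟨-, hs⟩ t hts ht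
    refine ⟨ht, fun h => hs ?_⟩
    subst h
    exact Finset.univ_subset_iff.1 hts

end ASC

/-- The matching complex of a simple graph: vertices the edges (as 2-element
vertex sets), simplices the collections of pairwise disjoint edges. -/
def matchingComplex {V : Type} [DecidableEq V] (G : SimpleGraph V) : ASC (Finset V) where
  faces := {S | S.Nonempty ∧ (∀ e ∈ S, ∃ a b, G.Adj a b ∧ e = {a, b}) ∧
      (S : Set (Finset V)).Pairwise Disjoint}
  nonempty_of_mem := fun _ h => h.1
  down_closed := by
    rintro S ⟨hS, hmem, hdisj⟩ T hTS hT
    exact ⟨hT, fun e he => hmem e (hTS he), hdisj.mono (by exact_mod_cast hTS)⟩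

/-- The `r`-hypergraph matching complex `M_m(r)`: vertices the `r`-element
subsets of an `m`-element set, simplices the collections of pairwise disjoint
such subsets. -/
def hypMatching (m r : ℕ) : ASC (Finset (Fin m)) where
  faces := {S | S.Nonempty ∧ (∀ e ∈ S, e.card = r) ∧
      (S : Set (Finset (Fin m))).Pairwise Disjoint}
  nonempty_of_mem := fun _ h => h.1
  down_closed := by
    rintro S ⟨hS, hmem, hdisj⟩ T hTS hT
    exact ⟨hT, fun e he => hmem e (hTS he), hdisj.mono (by exact_mod_cast hTS)⟩

open ASC

/-
The link of a simplex `τ` of `Dʳ(X)` is the `r`-tupling of the link of its underlying simplex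
`δ(τ)` in `X`, which has `r(p+1)` vertices. A link of a `(k-1)`-simplex in a wCM complex of
dimension `n` is again wCM, of dimension `n - k - 1`, since links of links are links. The
assumed connectivity of `r`-tuplings of wCM complexes then applies to `Link_X(δ(τ))`, and the
resulting bound `(n - r(p+1) - 1 - 2r)/(r+1)` dominates `(n-r+1)/(r+1) - p - 2`.
-/

theorem Int.fdiv_sub_le_fdiv {a b c : ℤ} (k : ℤ) (hb : 0 < b) (h : a - k * b ≤ c) :
    a.fdiv b - k ≤ c.fdiv b := by
  rw [← Int.sub_mul_fdiv_right a k hb.ne', Int.fdiv_eq_ediv_of_nonneg _ hb.le,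
    Int.fdiv_eq_ediv_of_nonneg _ hb.le]
  exact Int.ediv_le_ediv hb h

theorem IsNConnected.mono {k k' : ℤ} {T : Type*} [TopologicalSpace T]
    (h : IsNConnected k T) (hk : k' ≤ k) : IsNConnected k' T :=
  ⟨fun h' => h.1 (h'.trans hk), fun n x hn => h.2 n x (hn.trans hk)⟩

namespace ASC

variable {V : Type} [DecidableEq V]

@[ext]
theorem ext {X Y : ASC V} (h : X.faces = Y.faces) : X = Y := by
  cases X; cases Y; cases h; rfl

theorem link_link (X : ASC V) {σ s : Finset V} (hs : s ∈ (X.link σ).faces) :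
    (X.link σ).link s = X.link (s ∪ σ) := by
  obtain ⟨-, hsσ, -⟩ := hs
  ext t
  constructor
  · rintro ⟨⟨htX, htσ, -⟩, hts, -, -, htsσ⟩
    exact ⟨htX, Finset.disjoint_union_right.2 ⟨hts, htσ⟩, by rwa [← Finset.union_assoc]⟩
  · rintro ⟨htX, htsσ, htsσX⟩
    obtain ⟨hts, htσ⟩ := Finset.disjoint_union_right.1 htsσ
    have hsub : ∀ u ⊆ s ∪ σ, t ∪ u ∈ X.faces := fun u hu =>
      X.down_closed _ htsσX _ (Finset.union_subset_union_right hu)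
        ((X.nonempty_of_mem t htX).mono Finset.subset_union_left)
    refine ⟨⟨htX, htσ, hsub σ Finset.subset_union_right⟩, hts,
      hsub s Finset.subset_union_left, Finset.disjoint_union_left.2 ⟨htσ, hsσ⟩,
      by rwa [Finset.union_assoc]⟩

theorem isWCM_link {X : ASC V} {n : ℤ} (hX : IsWCM X n) {σ : Finset V} (hσ : σ ∈ X.faces) :
    IsWCM (X.link σ) (n - σ.card - 1) := by
  refine ⟨(hX.2 σ hσ).mono (by omega), fun s hs => ?_⟩
  rw [X.link_link hs]
  have hconn := hX.2 (s ∪ σ) hs.2.2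
  rw [Finset.card_union_of_disjoint hs.2.1] at hconn
  exact hconn.mono (by push_cast; omega)

theorem card_biUnion_of_mem_tupling {X : ASC V} {r : ℕ} {τ : Finset (Finset V)}
    (hτ : τ ∈ (X.tupling r).faces) : (τ.biUnion id).card = r * τ.card := by
  rw [Finset.card_biUnion (t := id) fun σ hσ σ' hσ' hne => hτ.2.2.1 hσ hσ' hne, mul_comm]
  exact Finset.sum_const_nat fun σ hσ => (hτ.2.1 σ hσ).2

theorem link_tupling (X : ASC V) (r : ℕ) {τ : Finset (Finset V)}
    (hτ : τ ∈ (X.tupling r).faces) :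
    (X.tupling r).link τ = (X.link (τ.biUnion id)).tupling r := by
  obtain ⟨-, hτmem, hτdisj, -⟩ := hτ
  ext S
  constructor
  · rintro ⟨⟨hSne, hSmem, hSdisj, hSX⟩, hSτ, -, -, hUdisj, hUX⟩
    rw [Finset.union_biUnion] at hUX
    have hδ : Disjoint (S.biUnion id) (τ.biUnion id) := by
      refine (Finset.disjoint_biUnion_left _ _ _).2 fun σ hσ =>
        (Finset.disjoint_biUnion_right _ _ _).2 fun σ' hσ' => ?_
      exact hUdisj (by simp [hσ]) (by simp [hσ'])
        fun h : σ = σ' => Finset.disjoint_left.1 hSτ hσ (h ▸ hσ')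
    refine ⟨hSne, fun σ hσ => ⟨⟨(hSmem σ hσ).1, ?_, ?_⟩, (hSmem σ hσ).2⟩, hSdisj, hSX, hδ, hUX⟩
    · exact hδ.mono_left (Finset.subset_biUnion_of_mem id hσ)
    · exact X.down_closed _ hUX _
        (Finset.union_subset_union_left (Finset.subset_biUnion_of_mem id hσ))
        ((X.nonempty_of_mem σ (hSmem σ hσ).1).mono Finset.subset_union_left)
  · rintro ⟨hSne, hSmem, hSdisj, hSX, hδ, hUX⟩
    have hcross : ∀ σ ∈ S, ∀ σ' ∈ τ, Disjoint σ σ' := fun σ hσ σ' hσ' =>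
      hδ.mono (Finset.subset_biUnion_of_mem id hσ) (Finset.subset_biUnion_of_mem id hσ')
    have hSτ : Disjoint S τ := Finset.disjoint_left.2 fun σ hσ hστ =>
      (X.nonempty_of_mem σ (hSmem σ hσ).1.1).ne_empty
        (Finset.disjoint_self_iff_empty _ |>.1 (hcross σ hσ σ hστ))
    refine ⟨⟨hSne, fun σ hσ => ⟨(hSmem σ hσ).1.1, (hSmem σ hσ).2⟩, hSdisj, hSX⟩, hSτ,
      hSne.mono Finset.subset_union_left, ?_, ?_, by rwa [Finset.union_biUnion]⟩
    · intro σ hσ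
      rcases Finset.mem_union.1 hσ with h | h
      exacts [⟨(hSmem σ h).1.1, (hSmem σ h).2⟩, hτmem σ h]
    · rw [Finset.coe_union, Set.pairwise_union_of_symm]
      exact ⟨hSdisj, hτdisj, fun σ hσ σ' hσ' _ => hcross σ hσ σ' hσ'⟩

end ASC

theorem statement10_general {V : Type} [DecidableEq V] (r : ℕ)
    (H : ∀ (m : ℤ) (Y : ASC V), IsWCM Y m →
      IsNConnected (Int.fdiv (m - 2 * r) (r + 1)) (Y.tupling r).space)
    (X : ASC V) (n : ℤ) (hX : IsWCM X n)
    (p : ℕ) (τ : Finset (Finset V)) (hτ : τ ∈ (X.tupling r).faces) (hp : τ.card = p + 1) :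
    IsNConnected (Int.fdiv (n - r + 1) (r + 1) - p - 2) ((X.tupling r).link τ).space := by
  have hlink := H _ _ (isWCM_link hX hτ.2.2.2)
  rw [card_biUnion_of_mem_tupling hτ, hp] at hlink
  push_cast at hlink
  rw [link_tupling X r hτ]
  refine hlink.mono ?_
  calc (n - r + 1).fdiv (r + 1) - p - 2 = (n - r + 1).fdiv (r + 1) - (p + 2) := by ring
    _ ≤ _ := Int.fdiv_sub_le_fdiv _ (by positivity) (by nlinarith)

theorem statement10 {V : Type} [DecidableEq V] (r : ℕ) (hr : 1 ≤ r)
    (H : ∀ (m : ℤ) (Y : ASC V), IsWCM Y m →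
      IsNConnected (Int.fdiv (m - 2 * r) (r + 1)) (Y.tupling r).space)
    (X : ASC V) (n : ℤ) (hX : IsWCM X n)
    (p : ℕ) (τ : Finset (Finset V)) (hτ : τ ∈ (X.tupling r).faces) (hp : τ.card = p + 1) :
    IsNConnected (Int.fdiv (n - r + 1) (r + 1) - p - 2) ((X.tupling r).link τ).space :=
  statement10_general r H X n hX p τ hτ hp
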